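/- arXiv:1506.03262 — 2 statements merged into one kernel-verified Lean document; each statement's English description precedes it below -/
import Mathlib

section
/- (Relative select for supersequences, new-character case.) Let S₁ be a subsequence of S₂ witnessed by a strictly increasing character-preserving map g. Let D be the subsequence of S₂ consisting of the characters at positions not in im(g), taken in order. Define B of length |S₂| by B[p] = 1 iff p ∉ im(g), and for each character x define B_x of length occ(x, S₂) by B_x[i] = 1 iff the position of the i-th occurrence of x in S₂ is not in im(g). Then for every character x and every i with 1 ≤ i ≤ occ(x, S₂) such that B_x[i] = 1: select_x(S₂, i) = select₁(B, select_x(D, rank₁(B_x, i))). -/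
/-!
Work with 0-indexed position lists: `Q` (the occurrences of `x` in `S₂`, i.e. `S₂.findIdxs (· == x)`)
and `P` (the positions outside the image of `g`). Then `B_x` is `Q` mapped by the test "outside the
image", so if the `i`-th occurrence `q` of `x` is outside the image, `rank₁(B_x, i) - 1` is its index
in `Q.filter outside`. That list is also `P.filter (carries x)`, whose indices in `P` are exactly the
occurrences of `x` in `D`; and `select₁(B, ·)` reads off the entries of `P`.
-/

namespace RS

variable {α : Type*} [DecidableEq α]

/-- 1-indexed position of the `j`-th occurrence of `a` in `S` (junk value if out of range). -/
def sel (a : α) (S : List α) (j : ℕ) : ℕ :=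
  (((List.range S.length).filter (fun p => decide (S[p]? = some a))).getD (j - 1) 0) + 1

/-- Number of occurrences of `a` among the first `i` characters of `S` (1-indexed). -/
def rank (a : α) (S : List α) (i : ℕ) : ℕ := (S.take i).count a

/-- Total number of occurrences of `a` in `S`. -/
def occ (a : α) (S : List α) : ℕ := S.count a

def rank0 (B : List Bool) (i : ℕ) : ℕ := (B.take i).count false
def rank1 (B : List Bool) (i : ℕ) : ℕ := (B.take i).count true
def sel0 (B : List Bool) (i : ℕ) : ℕ := sel false B i
def sel1 (B : List Bool) (i : ℕ) : ℕ := sel true B i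

/-- `f` is a strictly increasing, character-preserving embedding of `S₂` into `S₁`
(all positions 1-indexed). -/
def Emb (S₂ S₁ : List α) (f : ℕ → ℕ) : Prop :=
  (∀ j, 1 ≤ j → j ≤ S₂.length → 1 ≤ f j ∧ f j ≤ S₁.length) ∧
  (∀ j k, 1 ≤ j → j < k → k ≤ S₂.length → f j < f k) ∧
  (∀ j, 1 ≤ j → j ≤ S₂.length → S₂[j - 1]? = S₁[f j - 1]?)

/-- Is the 1-indexed position `p` in the image `{f 1, …, f m}`? -/
def inIm (m : ℕ) (f : ℕ → ℕ) (p : ℕ) : Bool :=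
  (List.range m).any (fun j => f (j + 1) == p)

/-- Bitvector of length `n` marking with `true` (`1`) the 1-indexed positions
outside the image `{f 1, …, f m}`. -/
def markB (n m : ℕ) (f : ℕ → ℕ) : List Bool :=
  (List.range n).map (fun p => !inIm m f (p + 1))

/-- Bitvector of length `occ x S` whose `i`-th bit is `true` (`1`) iff the position
of the `i`-th occurrence of `x` in `S` is outside the image `{f 1, …, f m}`. -/
def markBx (x : α) (S : List α) (m : ℕ) (f : ℕ → ℕ) : List Bool :=
  (List.range (occ x S)).map (fun i => !inIm m f (sel x S (i + 1)))

/-- The subsequence of `S` consisting of the characters at positions outside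
the image `{g 1, …, g m}`, in order. -/
def delIm (S : List α) (m : ℕ) (g : ℕ → ℕ) : List α :=
  (List.range S.length).filterMap (fun p => if inIm m g (p + 1) then none else S[p]?)

open List

theorem findIdxs_eq_filter_range {β : Type*} (L : List β) (p : β → Bool) (d : β) :
    L.findIdxs p = (range L.length).filter fun i => p (L.getD i d) := by
  induction L with
  | nil => simp
  | cons a T ih =>
    rw [findIdxs_cons, findIdxs_start, ih, length_cons, range_succ_eq_map]
    by_cases h : p a <;> simp [h, filter_map, Function.comp_def]

theorem findIdxs_range (n : ℕ) (p : ℕ → Bool) : (range n).findIdxs p = (range n).filter p := by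
  rw [findIdxs_eq_filter_range _ _ 0, length_range]
  refine filter_congr fun i hi => ?_
  rw [getD_eq_getElem _ _ (by simpa using hi), getElem_range]

theorem map_getD_range {β : Type*} (L : List β) (d : β) :
    (range L.length).map (L.getD · d) = L :=
  ext_getElem (by simp) fun i _ hi => by simp [hi]

theorem sel_eq_getD_findIdxs (a : α) (S : List α) (j : ℕ) :
    sel a S j = (S.findIdxs (· == a)).getD (j - 1) 0 + 1 := by
  rw [sel, findIdxs_eq_filter_range _ _ a]
  congr 2
  refine filter_congr fun i hi => ?_
  rw [mem_range] at hi
  simp [getElem?_eq_getElem hi, _root_.beq_eq_decide]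

theorem getElem?_filter_countP_take {β : Type*} {l : List β} {p : β → Bool} {j : ℕ} {y : β}
    (hy : l[j]? = some y) (hp : p y) : (l.filter p)[(l.take j).countP p]? = some y := by
  obtain ⟨hj, hjy⟩ := List.getElem?_eq_some_iff.mp hy
  have hsplit : l = l.take j ++ y :: l.drop (j + 1) := by
    rw [← hjy, ← drop_eq_getElem_cons hj, take_append_drop]
  nth_rw 1 [hsplit]
  rw [filter_append, getElem?_append_right] <;> simp [countP_eq_length_filter, hp]

theorem getD_getD_findIdxs {β : Type*} {L : List β} {p : β → Bool} {r : ℕ} {y d : β}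
    (hy : (L.filter p)[r]? = some y) : L.getD ((L.findIdxs p).getD r 0) d = y := by
  obtain ⟨hr, rfl⟩ := List.getElem?_eq_some_iff.mp hy
  have hr' : r < (L.findIdxs p).length := by
    simpa [length_findIdxs, countP_eq_length_filter] using hr
  rw [getD_eq_getElem _ _ hr', getD_eq_getElem _ _ (by simpa using getElem_findIdxs_lt hr'),
    getElem_filter_eq_getElem_getElem_findIdxs hr]

theorem rank1_map_sub_one {β : Type*} {l : List β} {p : β → Bool} {i : ℕ}
    (hi : (l.map p)[i - 1]? = some true) : rank1 (l.map p) i - 1 = (l.take (i - 1)).countP p := by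
  have hcount : ∀ k, rank1 (l.map p) k = (l.take k).countP p := fun k => by
    simp [rank1, ← map_take, count, countP_map, Function.comp_def]
  rcases i with _ | j
  · simp [hcount]
  · obtain ⟨y, hy, hpy⟩ : ∃ y, l[j]? = some y ∧ p y := by simpa using hi
    rw [hcount, take_add_one, hy, countP_append]
    simp [hpy]

section Image

variable (m : ℕ) (g : ℕ → ℕ)

def outIm (p : ℕ) : Bool := !inIm m g (p + 1)

theorem markBx_eq_map (x : α) (S : List α) :
    markBx x S m g = (S.findIdxs (· == x)).map (outIm m g) := by
  have hlen : occ x S = (S.findIdxs (· == x)).length := by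
    rw [length_findIdxs, occ, count]
  rw [markBx, hlen]
  conv_rhs => rw [← map_getD_range (S.findIdxs (· == x)) 0, map_map]
  refine map_congr_left fun i _ => ?_
  simp [sel_eq_getD_findIdxs, outIm]

theorem sel1_markB (n t : ℕ) :
    sel1 (markB n m g) t = ((range n).filter (outIm m g)).getD (t - 1) 0 + 1 := by
  rw [sel1, sel_eq_getD_findIdxs, markB, findIdxs_map, findIdxs_range]
  congr 3
  funext p
  simp [outIm]

omit [DecidableEq α] in
theorem delIm_eq_map (S : List α) (d : α) :
    delIm S m g = ((range S.length).filter (outIm m g)).map (S.getD · d) := by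
  rw [delIm, ← filterMap_eq_map, filterMap_filter]
  refine filterMap_congr fun p hp => ?_
  rw [mem_range] at hp
  by_cases h : inIm m g (p + 1) <;> simp [h, outIm, getElem?_eq_getElem hp]

end Image

theorem relative_select_supersequence_new_general (S₁ S₂ : List α) (g : ℕ → ℕ)
    (x : α) (i : ℕ)
    (hbit : (markBx x S₂ S₁.length g)[i - 1]? = some true) :
    sel x S₂ i =
      sel1 (markB S₂.length S₁.length g)
        (sel x (delIm S₂ S₁.length g) (rank1 (markBx x S₂ S₁.length g) i)) := by
  rw [markBx_eq_map] at hbit ⊢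
  obtain ⟨q, hq, hout⟩ : ∃ q, (S₂.findIdxs (· == x))[i - 1]? = some q ∧ outIm S₁.length g q := by
    simpa using hbit
  have hfilter : ((range S₂.length).filter (outIm S₁.length g)).filter ((· == x) ∘ (S₂.getD · x))
      = (S₂.findIdxs (· == x)).filter (outIm S₁.length g) := by
    rw [findIdxs_eq_filter_range _ _ x, filter_comm]
    rfl
  have hq' := getElem?_filter_countP_take hq hout
  rw [← hfilter] at hq'
  rw [sel_eq_getD_findIdxs, getD_eq_getElem?_getD, hq, sel1_markB, sel_eq_getD_findIdxs,
    delIm_eq_map _ _ _ x, findIdxs_map, Nat.add_sub_cancel, rank1_map_sub_one hbit,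
    getD_getD_findIdxs hq', Option.getD_some]

theorem relative_select_supersequence_new (S₁ S₂ : List α) (g : ℕ → ℕ)
    (hg : Emb S₁ S₂ g) (x : α) (i : ℕ) (hi1 : 1 ≤ i) (hi2 : i ≤ occ x S₂)
    (hbit : (markBx x S₂ S₁.length g)[i - 1]? = some true) :
    sel x S₂ i =
      sel1 (markB S₂.length S₁.length g)
        (sel x (delIm S₂ S₁.length g) (rank1 (markBx x S₂ S₁.length g) i)) :=
  relative_select_supersequence_new_general S₁ S₂ g x i hbit

end RS
end

section
/- Let g be a strictly increasing character-preserving embedding of S₁ into S₂, let D be the subsequence of S₂ at positions outside im(g), and let B be the bitvector of length |S₂| with 1s exactly at positions outside im(g). Then for every character a: occ(a, S₂) = occ(a, S₁) + occ(a, D), and more generally for every position p of S₂: rank_a(S₂, p) = rank_a(S₁, rank₀(B, p)) + rank_a(D, rank₁(B, p)). -/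
/-!
Read `S₂` as the interleaving, steered by the bits of `B`, of the characters at image positions
(bit `0`) and those outside the image (bit `1`). The latter spell `D` by definition; the former
spell `S₁` because `g` is strictly increasing, so the image positions in increasing order are
`g 1 < ⋯ < g m`. For any interleaving, the first `p` characters consist of the first
`rank₀(B, p)` characters of the `0`-list and the first `rank₁(B, p)` of the `1`-list.
-/

namespace RS

variable {α : Type*} [DecidableEq α]

section Interleave

variable {ι : Type*} (P : ι → Bool)

theorem filter_take_eq_take_filter (l : List ι) (p : ℕ) :
    (l.take p).filter P = (l.filter P).take ((l.take p).countP P) := by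
  induction l generalizing p with
  | nil => simp
  | cons x l ih => cases p <;> by_cases h : P x <;> simp [h, ih]

theorem occ_map_split (l : List ι) (f : ι → α) (a : α) :
    occ a (l.map f) = occ a ((l.filter (!P ·)).map f) + occ a ((l.filter P).map f) := by
  simp only [occ, List.count, List.countP_map]
  rw [List.countP_eq_countP_filter_add l _ P, add_comm]

theorem rank_map_split (l : List ι) (f : ι → α) (a : α) (p : ℕ) :
    rank a (l.map f) p =
      rank a ((l.filter (!P ·)).map f) (rank0 (l.map P) p) +
        rank a ((l.filter P).map f) (rank1 (l.map P) p) := by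
  have hrank0 : rank0 (l.map P) p = (l.take p).countP (!P ·) := by
    simp only [rank0, List.count, ← List.map_take, List.countP_map]
    congr 1; funext x; simp
  have hrank1 : rank1 (l.map P) p = (l.take p).countP P := by
    simp only [rank1, List.count, ← List.map_take, List.countP_map]
    congr 1; funext x; simp
  simp only [rank, hrank0, hrank1, ← List.map_take, ← filter_take_eq_take_filter]
  exact occ_map_split P (l.take p) f a

end Interleave

theorem inIm_iff {m p : ℕ} {f : ℕ → ℕ} :
    inIm m f p = true ↔ ∃ j, 1 ≤ j ∧ j ≤ m ∧ f j = p := by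
  simp only [inIm, List.any_eq_true, List.mem_range, beq_iff_eq]
  constructor
  · rintro ⟨j, hj, hfj⟩
    exact ⟨j + 1, by omega, by omega, hfj⟩
  · rintro ⟨j, h1, h2, rfl⟩
    exact ⟨j - 1, by omega, by rw [Nat.sub_add_cancel h1]⟩

theorem markB_eq_map_finRange (n m : ℕ) (f : ℕ → ℕ) :
    markB n m f = (List.finRange n).map (fun i => !inIm m f (i.val + 1)) := by
  rw [markB, ← List.map_coe_finRange_eq_range, List.map_map]
  rfl

section

variable {β : Type*}

theorem delIm_eq_map_filter_finRange (S : List β) (m : ℕ) (f : ℕ → ℕ) :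
    delIm S m f = ((List.finRange S.length).filter (fun i => !inIm m f (i.val + 1))).map S.get := by
  rw [delIm, ← List.map_coe_finRange_eq_range, List.filterMap_map, ← List.filterMap_eq_map',
    List.filterMap_filter]
  congr 1
  funext i
  by_cases h : inIm m f (i.val + 1) <;> simp [h]

theorem filter_range_inIm {n m : ℕ} {f : ℕ → ℕ}
    (hbound : ∀ j, 1 ≤ j → j ≤ m → 1 ≤ f j ∧ f j ≤ n)
    (hmono : ∀ j k, 1 ≤ j → j < k → k ≤ m → f j < f k) :
    (List.range n).filter (fun q => inIm m f (q + 1)) =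
      (List.range m).map (fun j => f (j + 1) - 1) := by
  refine List.pairwise_lt_range.filter _ |>.eq_of_mem_iff ?_ fun q => ?_
  · refine List.pairwise_map.2 (List.pairwise_lt_range.imp_of_mem fun {j k} hj hk hjk => ?_)
    rw [List.mem_range] at hj hk
    have := hmono (j + 1) (k + 1) (by omega) (by omega) hk
    have := hbound (j + 1) (by omega) (by omega)
    omega
  · simp only [List.mem_filter, List.mem_range, inIm_iff, List.mem_map]
    constructor
    · rintro ⟨-, j, hj1, hjm, hfj⟩
      exact ⟨j - 1, by omega, by rw [Nat.sub_add_cancel hj1, hfj]; rfl⟩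
    · rintro ⟨j, hj, rfl⟩
      have := hbound (j + 1) (by omega) hj
      exact ⟨by omega, j + 1, by omega, hj, by omega⟩

theorem map_filter_finRange_inIm {S₁ S₂ : List β} {g : ℕ → ℕ} (hg : Emb S₁ S₂ g) :
    ((List.finRange S₂.length).filter (fun i => inIm S₁.length g (i.val + 1))).map S₂.get = S₁ := by
  set I := (List.finRange S₂.length).filter (fun i => inIm S₁.length g (i.val + 1))
  have hpos : I.map Fin.val = (List.range S₁.length).map (fun j => g (j + 1) - 1) := by
    rw [← filter_range_inIm hg.1 hg.2.1, ← List.map_coe_finRange_eq_range, List.filter_map]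
    rfl
  have hlen : I.length = S₁.length := by simpa using congrArg List.length hpos
  refine List.ext_getElem (by simpa using hlen) fun j h₁ h₂ => ?_
  have hj : (I[j]'(by simpa using h₁)).val = g (j + 1) - 1 := by
    have := List.getElem_of_eq hpos (by simpa using h₁)
    rwa [List.getElem_map, List.getElem_map, List.getElem_range] at this
  have hchar := hg.2.2 (j + 1) (by omega) h₂
  rw [Nat.add_sub_cancel, List.getElem?_eq_getElem h₂, ← hj] at hchar
  rw [List.getElem_map, List.get_eq_getElem, ← Option.some_inj, ← List.getElem?_eq_getElem, hchar]

end

theorem rank_split_of_emb (S₁ S₂ : List α) (g : ℕ → ℕ) (hg : Emb S₁ S₂ g) (a : α) :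
    occ a S₂ = occ a S₁ + occ a (delIm S₂ S₁.length g) ∧
    ∀ p : ℕ, 1 ≤ p → p ≤ S₂.length →
      rank a S₂ p =
        rank a S₁ (rank0 (markB S₂.length S₁.length g) p) +
          rank a (delIm S₂ S₁.length g) (rank1 (markB S₂.length S₁.length g) p) := by
  have hS₂ : S₂ = (List.finRange S₂.length).map S₂.get := (List.map_get_finRange S₂).symm
  rw [markB_eq_map_finRange, delIm_eq_map_filter_finRange]
  constructor
  · conv_lhs => rw [hS₂]
    rw [occ_map_split (fun i => !inIm S₁.length g (i.val + 1))]
    simp only [Bool.not_not, map_filter_finRange_inIm hg]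
  · intro p _ _
    conv_lhs => rw [hS₂]
    rw [rank_map_split (fun i => !inIm S₁.length g (i.val + 1))]
    simp only [Bool.not_not, map_filter_finRange_inIm hg]

end RS
end
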